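/- arXiv:1908.11400 — 2 statements merged into one kernel-verified Lean document; each statement's English description precedes it below -/
import Mathlib

section
/- Let M be a κ⁺-saturated model with A ⊆ M, where κ = ℵ₀ + |A|. If p ∈ S_M(x) is invariant over A, then there is a unique type in S_D(x) (for any M ⊆ D ⊆ U) which is invariant over A and extends p. -/
open FirstOrder Language Set

namespace DR

/-- A partial type over `M` in variables indexed by `β`: a set of formulas, each with
finitely many parameters from `M`. -/
abbrev PType (L : FirstOrder.Language) (M : Type) (β : Type) : Type _ :=
  Set ((k : ℕ) × (L.Formula (β ⊕ Fin k) × (Fin k → M)))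

variable {M : Type}

/-- Two `β`-tuples have the same type over the parameter set `A`. -/
def EqTp (L : FirstOrder.Language) [L.Structure M] (A : Set M) {β : Type} (f g : β → M) : Prop :=
  ∀ (k : ℕ) (a : Fin k → M), (∀ i, a i ∈ A) →
    ∀ φ : L.Formula (β ⊕ Fin k), φ.Realize (Sum.elim f a) ↔ φ.Realize (Sum.elim g a)

/-- All parameters of formulas in `p` lie in `D`. -/
def paramsIn {L : FirstOrder.Language} {β : Type} (D : Set M) (p : PType L M β) : Prop :=
  ∀ x ∈ p, ∀ i, x.2.2 i ∈ D

/-- The set of parameters appearing in `p`. -/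
def paramSet {L : FirstOrder.Language} {β : Type} (p : PType L M β) : Set M :=
  ⋃ x ∈ p, Set.range x.2.2

/-- The tuple `f` realizes every formula of `p`. -/
def realizes {L : FirstOrder.Language} [L.Structure M] {β : Type} (f : β → M)
    (p : PType L M β) : Prop :=
  ∀ x ∈ p, x.2.1.Realize (Sum.elim f x.2.2)

/-- `p` is finitely satisfiable by tuples with coordinates in `A`. -/
def finSatIn (L : FirstOrder.Language) [L.Structure M] (A : Set M) {β : Type}
    (p : PType L M β) : Prop :=
  ∀ s : Finset ((k : ℕ) × (L.Formula (β ⊕ Fin k) × (Fin k → M))), ↑s ⊆ p →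
    ∃ f : β → M, (∀ i, f i ∈ A) ∧ ∀ x ∈ s, x.2.1.Realize (Sum.elim f x.2.2)

/-- `p` is a complete (consistent) type over the parameter set `D`. -/
def isCompleteOver (L : FirstOrder.Language) [L.Structure M] (D : Set M) {β : Type}
    (p : PType L M β) : Prop :=
  paramsIn D p ∧ finSatIn L Set.univ p ∧
    ∀ (k : ℕ) (φ : L.Formula (β ⊕ Fin k)) (d : Fin k → M), (∀ i, d i ∈ D) →
      (⟨k, φ, d⟩ ∈ p ∨ ⟨k, φ.not, d⟩ ∈ p)

/-- `p` (a type with parameters in `D`) is invariant over `A`: membership of a formula depends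
only on the type over `A` of its parameter tuple. -/
def invariantOver (L : FirstOrder.Language) [L.Structure M] (A D : Set M) {β : Type}
    (p : PType L M β) : Prop :=
  ∀ (k : ℕ) (φ : L.Formula (β ⊕ Fin k)) (d d' : Fin k → M), (∀ i, d' i ∈ D) →
    EqTp L A d d' → ⟨k, φ, d⟩ ∈ p → ⟨k, φ, d'⟩ ∈ p

/-- The restriction of `p` to formulas with parameters in `S`. -/
def restrictParams {L : FirstOrder.Language} {β : Type} (S : Set M) (p : PType L M β) :
    PType L M β :=
  {x ∈ p | ∀ i, x.2.2 i ∈ S}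

/-- `S` is `κ⁺`-saturated (realizes consistent types over parameter sets of size `≤ κ`). -/
def satIn (L : FirstOrder.Language) [L.Structure M] (S : Set M) (κ : Cardinal) : Prop :=
  ∀ (n : ℕ) (p : PType L M (Fin n)), paramsIn S p → Cardinal.mk ↥(paramSet p) ≤ κ →
    finSatIn L Set.univ p → ∃ f : Fin n → M, (∀ i, f i ∈ S) ∧ realizes f p

/-- Saturation of the whole structure below the cardinal `κ` (in all small variable contexts). -/
def SatAll (L : FirstOrder.Language) (M : Type) [L.Structure M] (κ : Cardinal) : Prop :=
  ∀ (β : Type) (p : PType L M β), Cardinal.mk β < κ → Cardinal.mk ↥(paramSet p) < κ →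
    finSatIn L Set.univ p → ∃ f : β → M, realizes f p

/-- `M` is a monster model: saturated in its own cardinality. -/
def IsMonster (L : FirstOrder.Language) (M : Type) [L.Structure M] : Prop :=
  SatAll L M (Cardinal.mk M)

/-- The restriction of an `n`-type in tuple-variables to the sub-tuple of variables
selected by `σ`. -/
def restrictVars {L : FirstOrder.Language} {α : Type} {m n : ℕ} (σ : Fin m → Fin n)
    (p : PType L M (Fin n × α)) : PType L M (Fin m × α) :=
  {x | ⟨x.1, x.2.1.relabel (Sum.map (Prod.map σ id) id), x.2.2⟩ ∈ p}

/-- An `n`-type over `D` is `m`-determined if it is completely determined by the `m`-types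
it contains among its variables. -/
def mDetermined (L : FirstOrder.Language) [L.Structure M] {α : Type} {n : ℕ} (m : ℕ)
    (D : Set M) (p : PType L M (Fin n × α)) : Prop :=
  ∀ q : PType L M (Fin n × α), isCompleteOver L D q →
    (∀ σ : Fin m → Fin n, StrictMono σ → restrictVars σ q = restrictVars σ p) → q = p

/-- Flatten a finite tuple of `α`-tuples into a single tuple. -/
def tupcat {α : Type} {N : ℕ} (c : Fin N → α → M) : Fin N × α → M := fun x => c x.1 x.2

/-- The sequence `b` of `α`-tuples is indiscernible over `A`. -/
def indiscOver (L : FirstOrder.Language) [L.Structure M] (A : Set M) {ι α : Type}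
    [LinearOrder ι] (b : ι → α → M) : Prop :=
  ∀ (N : ℕ) (f g : Fin N → ι), StrictMono f → StrictMono g →
    EqTp L A (tupcat fun j => b (f j)) (tupcat fun j => b (g j))

/-- `T = Th(M)` is NIP: every formula has finite alternation rank on every
indiscernible sequence. -/
def IsNIP (L : FirstOrder.Language) (M : Type) [L.Structure M] : Prop :=
  ∀ (β ι : Type) [LinearOrder ι] (b : ι → β → M), indiscOver L ∅ b →
    ∀ (k : ℕ) (φ : L.Formula (β ⊕ Fin k)) (d : Fin k → M),
      ∃ N : ℕ, ∀ f : Fin (N + 1) → ι, StrictMono f →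
        ∃ j : Fin N,
          (φ.Realize (Sum.elim (b (f j.castSucc)) d) ↔ φ.Realize (Sum.elim (b (f j.succ)) d))

/-- The (global) limit type of a sequence: formulas eventually satisfied along the sequence. -/
def limTp (L : FirstOrder.Language) [L.Structure M] {ι : Type} [LinearOrder ι] (b : ι → M) :
    PType L M (Fin 1) :=
  {x | ∃ i₀ : ι, ∀ i ≥ i₀, x.2.1.Realize (Sum.elim (fun _ : Fin 1 => b i) x.2.2)}

/-- The product `p₀ ⊗ ⋯ ⊗ p_{n-1}` (resolved left to right) of global types invariant
over `A`, in singleton variables. -/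
def nProd (L : FirstOrder.Language) [L.Structure M] (A : Set M) :
    (n : ℕ) → (Fin n → PType L M (Fin 1)) → PType L M (Fin n)
  | 0, _ => {x | x.2.1.Realize (Sum.elim (fun v : Fin 0 => v.elim0) x.2.2)}
  | n + 1, ps =>
    {x | ∀ a : M,
      realizes (fun _ : Fin 1 => a) (restrictParams (A ∪ Set.range x.2.2) (ps 0)) →
      ⟨x.1 + 1,
        x.2.1.relabel (Sum.elim
          (fun v : Fin (n + 1) =>
            (Fin.cases (Sum.inr (Fin.last x.1)) (fun i => Sum.inl i) v : Fin n ⊕ Fin (x.1 + 1)))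
          (fun j : Fin x.1 => Sum.inr j.castSucc)),
        Fin.snoc x.2.2 a⟩ ∈ nProd L A n (fun i => ps i.succ)}

/-- `c` is (the left part of) a Dedekind cut: a nonempty proper lower set with no maximum,
whose complement has no minimum. -/
def IsDedekindCut {ι : Type} [LinearOrder ι] (c : Set ι) : Prop :=
  c.Nonempty ∧ cᶜ.Nonempty ∧ (∀ i ∈ c, ∀ j, j ≤ i → j ∈ c) ∧
    (∀ i ∈ c, ∃ j ∈ c, i < j) ∧ (∀ i ∈ cᶜ, ∃ j ∈ cᶜ, j < i)

/-- The strict order on the index extended by points inserted at the cuts `Lc`. -/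
def insLT {ι η : Type} [LinearOrder ι] [LinearOrder η] (Lc : η → Set ι) :
    (ι ⊕ η) → (ι ⊕ η) → Prop
  | Sum.inl i, Sum.inl j => i < j
  | Sum.inl i, Sum.inr e => i ∈ Lc e
  | Sum.inr e, Sum.inl i => i ∉ Lc e
  | Sum.inr e, Sum.inr e' => Lc e ⊂ Lc e' ∨ (Lc e = Lc e' ∧ e < e')

/-- The sequence `b` remains indiscernible over `A` after inserting the tuples `a e` for
`e ∈ S`, each at the cut `Lc e`. -/
def InsertsInd (L : FirstOrder.Language) [L.Structure M] (A : Set M) {ι η α : Type}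
    [LinearOrder ι] [LinearOrder η] (b : ι → α → M) (Lc : η → Set ι) (a : η → α → M)
    (S : Set η) : Prop :=
  ∀ (N : ℕ) (f g : Fin N → ι ⊕ η),
    (∀ x y : Fin N, x < y → insLT Lc (f x) (f y)) →
    (∀ x y : Fin N, x < y → insLT Lc (g x) (g y)) →
    (∀ x e, f x = Sum.inr e → e ∈ S) → (∀ x e, g x = Sum.inr e → e ∈ S) →
    EqTp L A (tupcat fun j => Sum.elim b a (f j)) (tupcat fun j => Sum.elim b a (g j))

/-- The left part of the `t`-th cut of the partition `part`. -/
def cutSet {ι : Type} [LinearOrder ι] {n : ℕ} (part : ι → Fin (n + 1)) (t : Fin n) : Set ι :=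
  {i | part i ≤ t.castSucc}

/-- `part` is a Dedekind partition: a monotone surjection onto `Fin (n+1)` all of whose
`n` cuts are Dedekind. -/
def IsDedekindPartition {ι : Type} [LinearOrder ι] {n : ℕ} (part : ι → Fin (n + 1)) : Prop :=
  Monotone part ∧ (∀ t, ∃ i, part i = t) ∧ ∀ t : Fin n, IsDedekindCut (cutSet part t)

/-- The Dedekind partition `part` of the sequence `b` (indiscernible over `A`) is `m`-distal:
if every `m`-element subset of `(a 0, …, a (n-1))` inserts indiscernibly over `A` at the cuts,
then the whole tuple inserts. -/
def MDistalPartition (L : FirstOrder.Language) [L.Structure M] (A : Set M) {ι α : Type}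
    [LinearOrder ι] {n : ℕ} (b : ι → α → M) (part : ι → Fin (n + 1)) (m : ℕ) : Prop :=
  ∀ a : Fin n → α → M,
    (∀ S : Set (Fin n), S.ncard = m → InsertsInd L A b (cutSet part) a S) →
    InsertsInd L A b (cutSet part) a Set.univ

/-- The limit type `lim(c₀, …, c_{n-1})` of the cuts of the partition `part`, as a type
in `n` tuple-variables: formulas satisfied by all tuples close enough to the cuts. -/
def limCutTp (L : FirstOrder.Language) [L.Structure M] {ι α : Type} [LinearOrder ι] {n : ℕ}
    (b : ι → α → M) (part : ι → Fin (n + 1)) : PType L M (Fin n × α) :=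
  {x | ∃ lo hi : Fin n → ι,
    (∀ t, lo t ∈ cutSet part t) ∧ (∀ t, hi t ∉ cutSet part t) ∧
    ∀ it : Fin n → ι, (∀ t, lo t < it t ∧ it t < hi t) →
      x.2.1.Realize (Sum.elim (fun v => b (it v.1) v.2) x.2.2)}

/-- Two sequences have the same EM-type (over `∅`). -/
def SameEM (L : FirstOrder.Language) [L.Structure M] {ι κι α : Type} [LinearOrder ι]
    [LinearOrder κι] (b : ι → α → M) (c : κι → α → M) : Prop :=
  ∀ (N : ℕ) (f : Fin N → ι) (g : Fin N → κι), StrictMono f → StrictMono g →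
    EqTp L ∅ (tupcat fun j => b (f j)) (tupcat fun j => c (g j))

/-- The complete EM-type of the indiscernible sequence `b` is `(n, m)`-distal: every Dedekind
partition with `n` cuts of every sequence with the same EM-type is `m`-distal. -/
def EMdistalNM (L : FirstOrder.Language) [L.Structure M] {ι α : Type} [LinearOrder ι]
    (b : ι → α → M) (n m : ℕ) : Prop :=
  ∀ (κι : Type) [LinearOrder κι] (c : κι → α → M), SameEM L b c →
    ∀ part : κι → Fin (n + 1), IsDedekindPartition part → MDistalPartition L ∅ c part m

/-- The index of an `(m+1)`-skeleton: `ω + (ω* + ω) + ⋯ + (ω* + ω) + ω*` with `m` middle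
pieces of type `ω* + ω ≅ ℤ`. -/
abbrev SkelIdx (m : ℕ) : Type := (ℕ ⊕ₗ Lex (Fin m × ℤ)) ⊕ₗ ℕᵒᵈ

/-- The canonical partition of the skeleton index into its `m + 2` pieces. -/
def skelPart (m : ℕ) : SkelIdx m → Fin (m + 2) := fun x =>
  match ofLex x with
  | Sum.inl y =>
    match ofLex y with
    | Sum.inl _ => 0
    | Sum.inr tz => ((ofLex tz).1.succ).castSucc
  | Sum.inr _ => Fin.last (m + 1)

/-- The theory of `M`, with parameters for `A` named, is `m`-distal: every Dedekind
partition with `m + 1` cuts of every sequence indiscernible over `A` is `m`-distal over `A`. -/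
def TheoryMDistalOver (L : FirstOrder.Language) (M : Type) [L.Structure M] (A : Set M)
    (m : ℕ) : Prop :=
  ∀ (ι α : Type) [LinearOrder ι] (b : ι → α → M), indiscOver L A b →
    ∀ part : ι → Fin (m + 2), IsDedekindPartition part → MDistalPartition L A b part m

/-- `T = Th(M)` is stable: every indiscernible sequence is totally indiscernible. -/
def TotallyIndisc (L : FirstOrder.Language) (M : Type) [L.Structure M] : Prop :=
  ∀ (ι α : Type) [LinearOrder ι] (b : ι → α → M), indiscOver L ∅ b →
    ∀ (N : ℕ) (f g : Fin N → ι), Function.Injective f → Function.Injective g →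
      EqTp L ∅ (tupcat fun j => b (f j)) (tupcat fun j => b (g j))

/-- `T = Th(M)` is strongly `1`-distal. -/
def StronglyOneDistal (L : FirstOrder.Language) (M : Type) [L.Structure M] : Prop :=
  ∀ (ι α : Type) [LinearOrder ι] (b : ι → α → M) (c : Set ι), IsDedekindCut c →
    ∀ (D : Set M) (a : α → M), indiscOver L D b →
      InsertsInd L ∅ b (fun _ : PUnit => c) (fun _ => a) Set.univ →
      InsertsInd L D b (fun _ : PUnit => c) (fun _ => a) Set.univ

/-- The language with a single `n`-ary relation symbol. -/
def hyperLang (n : ℕ) : FirstOrder.Language where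
  Functions := fun _ => Empty
  Relations := fun k => PLift (k = n)

/-- The edge relation of a `hyperLang n`-structure. -/
def Edge {n : ℕ} {M : Type} [S : (hyperLang n).Structure M] (v : Fin n → M) : Prop :=
  Structure.RelMap (L := hyperLang n) (⟨rfl⟩ : (hyperLang n).Relations n) v

/-- `M` is a generic `(n+2)`-uniform hypergraph: an infinite `(n+2)`-uniform hypergraph
satisfying all extension axioms `φ_{s,t}`. -/
def IsGenericHypergraph (n : ℕ) (M : Type) [S : (hyperLang (n + 2)).Structure M] : Prop :=
  Infinite M ∧
  (∀ (v : Fin (n + 2) → M) (σ : Equiv.Perm (Fin (n + 2))), Edge v → Edge (v ∘ σ)) ∧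
  (∀ v : Fin (n + 2) → M, Edge v → Function.Injective v) ∧
  ∀ (s t : ℕ) (A : Fin s → Fin (n + 1) → M) (B : Fin t → Fin (n + 1) → M),
    (∀ i, Function.Injective (A i)) → (∀ j, Function.Injective (B j)) →
    (∀ i j, i ≠ j → Set.range (A i) ≠ Set.range (A j)) →
    (∀ i j, i ≠ j → Set.range (B i) ≠ Set.range (B j)) →
    (∀ i j, Set.range (A i) ≠ Set.range (B j)) →
    ∃ x : M, (∀ i, Edge (Fin.snoc (A i) x)) ∧ ∀ j, ¬ Edge (Fin.snoc (B j) x)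

variable {M : Type}

/-- The unique `A`-invariant global extension of a type `q` over the saturated model `S`. -/
def globExtT (L : FirstOrder.Language) [L.Structure M] (A S : Set M) {β : Type}
    (q : PType L M β) : PType L M β :=
  {x | ∀ d' : Fin x.1 → M, (∀ i, d' i ∈ S) → EqTp L A x.2.2 d' → ⟨x.1, x.2.1, d'⟩ ∈ q}

/-- The product `p ⊗ q` (resolved left to right) of a type `p` with an `A`-invariant type `q`
over the saturated model `S`: `φ(x, y, d) ∈ p ⊗ q` iff for every `a` realizing the restriction
of `p` to `A ∪ d`, the formula `φ(a, y, d)` lies in the `A`-invariant global extension of `q`. -/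
def prodT (L : FirstOrder.Language) [L.Structure M] (A S : Set M) {na nb : ℕ}
    (p : PType L M (Fin na)) (q : PType L M (Fin nb)) : PType L M (Fin na ⊕ Fin nb) :=
  {x | ∀ a : Fin na → M, realizes a (restrictParams (A ∪ Set.range x.2.2) p) →
    ⟨x.1 + na,
      x.2.1.relabel (Sum.elim
        (Sum.elim (fun i : Fin na => Sum.inr (Fin.natAdd x.1 i)) Sum.inl)
        (fun j : Fin x.1 => Sum.inr (Fin.castAdd na j))),
      Fin.append x.2.2 a⟩ ∈ globExtT L A S q}

/-- A Dedekind partition with `n` cuts of a sequence with the same EM-type as `b`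
which is `m`-distal. -/
structure DistalWitness (L : FirstOrder.Language) (M : Type) [L.Structure M] {ι α : Type}
    [LinearOrder ι] (b : ι → α → M) (n m : ℕ) : Type 1 where
  κι : Type
  [inst : LinearOrder κι]
  c : κι → α → M
  part : κι → Fin (n + 1)
  same : SameEM L b c
  ded : IsDedekindPartition part
  dist : MDistalPartition L ∅ c part m

/-! The extension contains `φ(x, d)` iff `φ(x, d') ∈ p` for a conjugate `d' ∈ S` of `d` over `A`:
conjugates exist because `S` is `(ℵ₀ + |A|)⁺`-saturated, and by invariance of `p` the choice of
`d'` is irrelevant, which also gives completeness and invariance of the extension. Finite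
satisfiability passes from `p` to the extension through one existential formula in the joint
parameters, true at a conjugate in `S` and hence at the original tuple. Any invariant complete
extension `q` of `p` must agree with `p` at the conjugates, so it is contained in, hence equal
to, this one. -/

section InvariantExtension

variable {L : FirstOrder.Language} [L.Structure M] {A : Set M}

theorem EqTp.symm {β : Type} {f g : β → M} (h : EqTp L A f g) : EqTp L A g f :=
  fun k a ha φ => (h k a ha φ).symm

theorem EqTp.trans {β : Type} {f g h : β → M} (h₁ : EqTp L A f g) (h₂ : EqTp L A g h) :
    EqTp L A f h :=
  fun k a ha φ => (h₁ k a ha φ).trans (h₂ k a ha φ)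

theorem EqTp.comp {β γ : Type} {f g : β → M} (h : EqTp L A f g) (ρ : γ → β) :
    EqTp L A (f ∘ ρ) (g ∘ ρ) := by
  intro k a ha φ
  simpa only [Formula.realize_relabel, Sum.elim_comp_map, Function.comp_id]
    using h k a ha (φ.relabel (Sum.map ρ id))

theorem EqTp.realize_iff {β : Type} {f g : β → M} (h : EqTp L A f g) (φ : L.Formula β) :
    φ.Realize f ↔ φ.Realize g := by
  simpa only [Formula.realize_relabel, Sum.elim_comp_inl]
    using h 0 finZeroElim finZeroElim (φ.relabel Sum.inl)

theorem EqTp.exists_realize {β γ : Type} {u u' : γ → M} (h : EqTp L A u u')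
    (φ : L.Formula (β ⊕ γ)) (hφ : ∃ g, φ.Realize (Sum.elim g u)) :
    ∃ g, φ.Realize (Sum.elim g u') := by
  classical
  obtain ⟨g₀, hg₀⟩ := hφ
  let F : Finset β := φ.freeVarFinset.toLeft
  -- `β` may be infinite: quantify only over the finitely many variables of `β` that occur in `φ`.
  let ψ : L.Formula (γ ⊕ F) := φ.restrictFreeVar fun x => Sum.casesOn x.1
    (fun b hb => Sum.inr ⟨b, by simpa [F] using hb⟩) (fun c _ => Sum.inl c) x.2
  have hψ : ∀ (g : β → M) (v : γ → M),
      ψ.Realize (Sum.elim v (g ∘ (↑))) ↔ φ.Realize (Sum.elim g v) :=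
    fun g v => BoundedFormula.realize_restrictFreeVar _ (by rintro ⟨b | c, hx⟩ <;> rfl)
  obtain ⟨g', hg'⟩ := Formula.realize_iExs.mp <| (h.realize_iff (ψ.iExs F)).mp <|
    Formula.realize_iExs.mpr ⟨g₀ ∘ (↑), (hψ g₀ u).mpr hg₀⟩
  refine ⟨fun b => if hb : b ∈ F then g' ⟨b, hb⟩ else g₀ b, (hψ _ u').mp ?_⟩
  convert hg'
  funext ⟨b, hb⟩
  simp [hb]

def tpOver (L : FirstOrder.Language) [L.Structure M] (A : Set M) {β : Type} (d : β → M) :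
    PType L M β :=
  {x | (∀ i, x.2.2 i ∈ A) ∧ x.2.1.Realize (Sum.elim d x.2.2)}

theorem realizes_tpOver_iff {β : Type} {d d' : β → M} :
    realizes d' (tpOver L A d) ↔ EqTp L A d d' := by
  refine ⟨fun h k a ha φ => ⟨fun hφ => h ⟨k, φ, a⟩ ⟨ha, hφ⟩, fun hφ => ?_⟩, ?_⟩
  · by_contra hn
    exact Formula.realize_not.mp (h ⟨k, φ.not, a⟩ ⟨ha, Formula.realize_not.mpr hn⟩) hφ
  · rintro h ⟨k, φ, a⟩ ⟨ha, hφ⟩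
    exact (h k a ha φ).mp hφ

theorem exists_eqTp_mem_of_satIn {S : Set M} (hAS : A ⊆ S)
    (hsat : satIn L S (Cardinal.aleph0 + Cardinal.mk ↥A)) {γ : Type} [Finite γ] (d : γ → M) :
    ∃ d' : γ → M, (∀ i, d' i ∈ S) ∧ EqTp L A d d' := by
  let e := Finite.equivFin γ
  have hparams : paramsIn S (tpOver L A (d ∘ e.symm)) := fun x hx i => hAS (hx.1 i)
  have hcard : Cardinal.mk ↥(paramSet (tpOver L A (d ∘ e.symm))) ≤
      Cardinal.aleph0 + Cardinal.mk ↥A := by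
    refine (Cardinal.mk_le_mk_of_subset ?_).trans (self_le_add_left _ _)
    simp only [paramSet, iUnion_subset_iff, range_subset_iff]
    exact fun x hx i => hx.1 i
  obtain ⟨d', hd'S, hd'⟩ := hsat _ _ hparams hcard
    fun s hs => ⟨d ∘ e.symm, fun _ => mem_univ _, fun x hx => (hs hx).2⟩
  refine ⟨d' ∘ e, fun i => hd'S _, ?_⟩
  simpa [Function.comp_def] using (realizes_tpOver_iff.mp hd').comp e

theorem finSatIn.mono {B : Set M} {β : Type} {q q' : PType L M β} (h : q ⊆ q')
    (hq' : finSatIn L B q') : finSatIn L B q :=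
  fun s hs => hq' s (hs.trans h)

theorem finSatIn.not_mem_not {B : Set M} {β : Type} {q : PType L M β} (hq : finSatIn L B q)
    {k : ℕ} {φ : L.Formula (β ⊕ Fin k)} {d : Fin k → M} (h : ⟨k, φ, d⟩ ∈ q) :
    ⟨k, φ.not, d⟩ ∉ q := by
  classical
  intro hn
  obtain ⟨f, -, hf⟩ := hq {⟨k, φ, d⟩, ⟨k, φ.not, d⟩}
    (by simp [insert_subset_iff, h, hn])
  exact Formula.realize_not.mp (hf ⟨k, φ.not, d⟩ (by simp)) (hf ⟨k, φ, d⟩ (by simp))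

theorem isCompleteOver.mem_of_mem {B S : Set M} {β : Type} {p q : PType L M β}
    (hp : isCompleteOver L S p) (hq : finSatIn L B q) (hpq : p ⊆ q) {k : ℕ}
    {φ : L.Formula (β ⊕ Fin k)} {d : Fin k → M} (hd : ∀ i, d i ∈ S)
    (h : ⟨k, φ, d⟩ ∈ q) : ⟨k, φ, d⟩ ∈ p :=
  (hp.2.2 k φ d hd).resolve_right fun hn => hq.not_mem_not h (hpq hn)

theorem isCompleteOver.eq_of_subset {D : Set M} {β : Type} {q q' : PType L M β}
    (hq : isCompleteOver L D q) (hq' : isCompleteOver L D q') (h : q ⊆ q') : q = q' :=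
  h.antisymm fun x hx => hq.mem_of_mem hq'.2.1 h (hq'.1 x hx) hx

theorem subset_globExtT {S : Set M} {β : Type} {p : PType L M β}
    (hinv : invariantOver L A S p) : p ⊆ globExtT L A S p :=
  fun _ hx d' hd'S hd' => hinv _ _ _ d' hd'S hd' hx

theorem invariantOver_restrictParams_globExtT (S D : Set M) {β : Type} (p : PType L M β) :
    invariantOver L A D (restrictParams D (globExtT L A S p)) :=
  fun _ _ _ _ hd'D hd hx => ⟨fun d'' hd''S hd'' => hx.1 d'' hd''S (hd.trans hd''), hd'D⟩

theorem mem_globExtT_or_mem_globExtT_not {S : Set M} (hAS : A ⊆ S)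
    (hsat : satIn L S (Cardinal.aleph0 + Cardinal.mk ↥A)) {β : Type} {p : PType L M β}
    (hp : isCompleteOver L S p) (hinv : invariantOver L A S p) (k : ℕ)
    (φ : L.Formula (β ⊕ Fin k)) (d : Fin k → M) :
    ⟨k, φ, d⟩ ∈ globExtT L A S p ∨ ⟨k, φ.not, d⟩ ∈ globExtT L A S p := by
  obtain ⟨d', hd'S, hd⟩ := exists_eqTp_mem_of_satIn hAS hsat d
  have transfer : ∀ ψ, ⟨k, ψ, d'⟩ ∈ p → ⟨k, ψ, d⟩ ∈ globExtT L A S p :=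
    fun ψ h d'' hd''S hd'' => hinv k ψ d' d'' hd''S (hd.symm.trans hd'') h
  exact (hp.2.2 k φ d' hd'S).imp (transfer φ) (transfer φ.not)

theorem finSatIn_globExtT {S : Set M} (hAS : A ⊆ S)
    (hsat : satIn L S (Cardinal.aleph0 + Cardinal.mk ↥A)) {β : Type} {p : PType L M β}
    (hp : finSatIn L univ p) : finSatIn L univ (globExtT L A S p) := by
  classical
  intro s hs
  -- enumerate `s` by `Fin n` so that the joint parameter tuple is indexed by a `Type`
  let xs : Fin s.card → s := s.equivFin.symm
  let u : (Σ i, Fin (xs i).1.1) → M := fun z => (xs z.1).1.2.2 z.2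
  obtain ⟨u', hu'S, hu⟩ := exists_eqTp_mem_of_satIn hAS hsat u
  let φ : L.Formula (β ⊕ Σ i, Fin (xs i).1.1) :=
    Formula.iInf fun i => (xs i).1.2.1.relabel (Sum.map id (Sigma.mk i))
  have hφ : ∀ (g : β → M) (v : (Σ i, Fin (xs i).1.1) → M), φ.Realize (Sum.elim g v) ↔
      ∀ i, (xs i).1.2.1.Realize (Sum.elim g fun j => v ⟨i, j⟩) := by
    intro g v
    simp only [φ, Formula.realize_iInf, Formula.realize_relabel, Sum.elim_comp_map]
    rfl
  let s' := Finset.univ.image fun i => (⟨(xs i).1.1, (xs i).1.2.1, fun j => u' ⟨i, j⟩⟩ :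
    (k : ℕ) × (L.Formula (β ⊕ Fin k) × (Fin k → M)))
  obtain ⟨g, -, hg⟩ := hp s' (by
    intro y hy
    simp only [s', Finset.coe_image, Finset.coe_univ, image_univ, mem_range] at hy
    obtain ⟨i, rfl⟩ := hy
    exact hs (xs i).2 _ (fun _ => hu'S _) (hu.comp fun j => ⟨i, j⟩))
  obtain ⟨g', hg'⟩ := hu.symm.exists_realize φ
    ⟨g, (hφ g u').mpr fun i => hg _ (Finset.mem_image_of_mem _ (Finset.mem_univ i))⟩
  have hg'xs : ∀ i, (xs i).1.2.1.Realize (Sum.elim g' (xs i).1.2.2) := (hφ g' u).mp hg'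
  refine ⟨g', fun _ => mem_univ _, fun x hx => ?_⟩
  obtain ⟨i, hi⟩ := s.equivFin.symm.surjective ⟨x, hx⟩
  have := hg'xs i
  rwa [show xs i = ⟨x, hx⟩ from hi] at this

theorem subset_restrictParams_globExtT {S D : Set M} (hSD : S ⊆ D) {β : Type}
    {p q : PType L M β} (hp : isCompleteOver L S p) (hq : isCompleteOver L D q)
    (hqinv : invariantOver L A D q) (hpq : p ⊆ q) :
    q ⊆ restrictParams D (globExtT L A S p) :=
  fun x hx => ⟨fun d' hd'S hd' =>
    hp.mem_of_mem hq.2.1 hpq hd'S (hqinv _ _ _ d' (fun i => hSD (hd'S i)) hd' hx), hq.1 x hx⟩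

end InvariantExtension

/-- an `A`-invariant type over a `κ⁺`-saturated model `E ⊇ A` has a unique
`A`-invariant extension to any larger parameter set `D`. -/
theorem stmt2 (L : FirstOrder.Language) (M : Type) [L.Structure M] {β : Type}
    (A D : Set M) (E : L.ElementarySubstructure M)
    (hAE : A ⊆ (E : Set M)) (hED : (E : Set M) ⊆ D)
    (hsat : satIn L (E : Set M) (Cardinal.aleph0 + Cardinal.mk ↥A))
    (p : PType L M β) (hp : isCompleteOver L (E : Set M) p)
    (hinv : invariantOver L A (E : Set M) p) :
    ∃! q : PType L M β, isCompleteOver L D q ∧ invariantOver L A D q ∧ p ⊆ q := by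
  have hext : isCompleteOver L D (restrictParams D (globExtT L A E p)) :=
    ⟨fun _ hx => hx.2, (finSatIn_globExtT hAE hsat hp.2.1).mono fun _ hx => hx.1,
      fun k φ d hd => (mem_globExtT_or_mem_globExtT_not hAE hsat hp hinv k φ d).imp
        (⟨·, hd⟩) (⟨·, hd⟩)⟩
  refine ⟨_, ⟨hext, invariantOver_restrictParams_globExtT _ _ p,
    fun x hx => ⟨subset_globExtT hinv hx, fun i => hED (hp.1 x hx i)⟩⟩, ?_⟩
  rintro q ⟨hq, hqinv, hpq⟩
  exact hq.eq_of_subset hext (subset_restrictParams_globExtT hED hp hq hqinv hpq)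

end DR
end

section
/- If T is a complete theory and A ⊆ U is a small set of parameters, then the distality rank of T_A (the theory with constants for A added) is at most the distality rank of T. -/
open FirstOrder Language Set

namespace DR

variable {M : Type}

variable {M : Type}

/-- Extend a tuple of `α`-tuples by appending the constants `p` to each tuple. -/
def extTup {α : Type} {N k : ℕ} (p : Fin k → M) (c : Fin N × α → M) :
    Fin N × (α ⊕ Fin k) → M := fun x => Sum.elim (fun y => c (x.1, y)) p x.2

/-- Tuples with the same type over `A` remain of the same type over `∅` after appending
constants from `A`. -/
lemma eqTp_extTup (L : FirstOrder.Language) [L.Structure M] (A : Set M)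
    {α : Type} {N k : ℕ} {p : Fin k → M} (hp : ∀ i, p i ∈ A) {c d : Fin N × α → M}
    (h : EqTp L A c d) : EqTp L ∅ (extTup p c) (extTup p d) := by
  intro k' a ha φ
  match k' with
  | k' + 1 => exact absurd (ha 0) (Set.notMem_empty _)
  | 0 =>
    let ρ : (Fin N × (α ⊕ Fin k)) ⊕ Fin 0 → (Fin N × α) ⊕ Fin k :=
      Sum.elim (fun x => Sum.elim (fun y => Sum.inl (x.1, y)) Sum.inr x.2) Fin.elim0
    have key := h k p hp (φ.relabel ρ)
    rw [Formula.realize_relabel, Formula.realize_relabel] at key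
    have hc : Sum.elim c p ∘ ρ = Sum.elim (extTup p c) a := by
      funext x
      rcases x with (⟨j, (y | t)⟩ | i)
      · rfl
      · rfl
      · exact i.elim0
    have hd : Sum.elim d p ∘ ρ = Sum.elim (extTup p d) a := by
      funext x
      rcases x with (⟨j, (y | t)⟩ | i)
      · rfl
      · rfl
      · exact i.elim0
    rw [hc, hd] at key
    exact key

/-- naming parameters does not increase distality rank. -/
theorem stmt12 (L : FirstOrder.Language) (M : Type) [L.Structure M] (A : Set M)
    (m : ℕ) (hm : 0 < m) (h : TheoryMDistalOver L M ∅ m) :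
    TheoryMDistalOver L M A m := by
  intro ι α _ b hb part hpart a hS N f g hf hg hfS hgS k p hp φ
  rcases Nat.eq_zero_or_pos N with hN | hN
  · subst hN
    have he : (tupcat fun j => Sum.elim b a (f j) : Fin 0 × α → M)
        = tupcat fun j => Sum.elim b a (g j) := funext fun x => x.1.elim0
    rw [he]
  · -- extend every tuple in sight by the parameters `p`
    set b'' : ι → (α ⊕ Fin k) → M := fun i => Sum.elim (b i) p with hb''def
    set a'' : Fin (m + 1) → (α ⊕ Fin k) → M := fun e => Sum.elim (a e) p with ha''def
    have fact1 : ∀ (N' : ℕ) (f' : Fin N' → ι),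
        (tupcat fun j => b'' (f' j)) = extTup p (tupcat fun j => b (f' j)) := by
      intro N' f'
      funext x
      rcases x with ⟨j, (y | t)⟩ <;> rfl
    have fact2 : ∀ (N' : ℕ) (f' : Fin N' → ι ⊕ Fin (m + 1)),
        (tupcat fun j => Sum.elim b'' a'' (f' j))
          = extTup p (tupcat fun j => Sum.elim b a (f' j)) := by
      intro N' f'
      funext x
      rcases x with ⟨j, y⟩
      show Sum.elim b'' a'' (f' j) y = Sum.elim (fun y' => Sum.elim b a (f' j) y') p y
      rcases f' j with i | e <;> rcases y with x | t <;> rfl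
    have hbind : indiscOver L ∅ b'' := by
      intro N' f' g' hf' hg'
      have := eqTp_extTup L A hp (hb N' f' g' hf' hg')
      rwa [← fact1 N' f', ← fact1 N' g'] at this
    have hS'' : ∀ S : Set (Fin (m + 1)), S.ncard = m →
        InsertsInd L ∅ b'' (cutSet part) a'' S := by
      intro S hSc N' f' g' h1 h2 h3 h4
      have := eqTp_extTup L A hp (hS S hSc N' f' g' h1 h2 h3 h4)
      rwa [← fact2 N' f', ← fact2 N' g'] at this
    have H := h ι (α ⊕ Fin k) b'' hbind part hpart a'' hS'' N f g hf hg
      (fun _ _ _ => Set.mem_univ _) (fun _ _ _ => Set.mem_univ _)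
    have j₀ : Fin N := ⟨0, hN⟩
    let ρ' : (Fin N × α) ⊕ Fin k → (Fin N × (α ⊕ Fin k)) ⊕ Fin 0 :=
      Sum.elim (fun x => Sum.inl (x.1, Sum.inl x.2)) (fun t => Sum.inl (j₀, Sum.inr t))
    have key := H 0 Fin.elim0 (fun i => i.elim0) (φ.relabel ρ')
    rw [Formula.realize_relabel, Formula.realize_relabel] at key
    have hc : ∀ f' : Fin N → ι ⊕ Fin (m + 1),
        Sum.elim (tupcat fun j => Sum.elim b'' a'' (f' j)) Fin.elim0 ∘ ρ'
          = Sum.elim (tupcat fun j => Sum.elim b a (f' j)) p := by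
      intro f'
      funext x
      rcases x with (⟨j, x⟩ | t)
      · show Sum.elim b'' a'' (f' j) (Sum.inl x) = Sum.elim b a (f' j) x
        rcases f' j with i | e <;> rfl
      · show Sum.elim b'' a'' (f' j₀) (Sum.inr t) = p t
        rcases f' j₀ with i | e <;> rfl
    rw [hc f, hc g] at key
    exact key

end DR
end
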